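/- arXiv:2510.13983 — 4 statements merged into one kernel-verified Lean document; each statement's English description precedes it below -/
import Mathlib

section
/- Suppose h_max has a unique minimizer b_g over {0,1}^n, with ground energy λ₁ = h_max(b_g) > 0 and first excited energy λ₂ = min over b ≠ b_g of h_max(b), and spectral gap ratio r = (λ₂ − λ₁)/λ₁. If the positive integer p satisfies (p : ℝ) > log M / log(r + 1), then b_g is also the unique minimizer of h_p; that is, h_p(b_g) < h_p(b) for every b ≠ b_g. -/
/-!
Since `h_max b_g = λ₁`, every summand of `h_p b_g` is at most `λ₁ ^ p`, so `h_p b_g ≤ M λ₁ ^ p`;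
for `b ≠ b_g` some objective reaches `h_max b ≥ λ₂`, so `h_p b ≥ λ₂ ^ p`. The bound on `p` says
exactly `M < (r + 1) ^ p = (λ₂ / λ₁) ^ p`, i.e. `M λ₁ ^ p < λ₂ ^ p`.
-/

open Finset

lemma sum_pow_lt_sum_pow_of_card_mul_pow_lt {ι : Type*} [Fintype ι] {f g : ι → ℝ} {a c : ℝ}
    {p : ℕ} (hf : ∀ i, 0 ≤ f i) (hfa : ∀ i, f i ≤ a) (hg : ∀ i, 0 ≤ g i) (j : ι) (hc : 0 ≤ c)
    (hcg : c ≤ g j) (hac : Fintype.card ι * a ^ p < c ^ p) :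
    ∑ i, f i ^ p < ∑ i, g i ^ p :=
  calc ∑ i, f i ^ p ≤ Fintype.card ι * a ^ p := by
        simpa using sum_le_card_nsmul univ (f · ^ p) (a ^ p)
          fun i _ ↦ pow_le_pow_left₀ (hf i) (hfa i) p
    _ < c ^ p := hac
    _ ≤ g j ^ p := pow_le_pow_left₀ hc hcg p
    _ ≤ ∑ i, g i ^ p := single_le_sum (fun i _ ↦ pow_nonneg (hg i) p) (mem_univ j)

lemma mul_pow_lt_pow_of_log_div_log_div_lt {x a c : ℝ} {p : ℕ} (ha : 0 < a) (hac : a < c)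
    (hp : Real.log x / Real.log (c / a) < p) : x * a ^ p < c ^ p := by
  have hca : 1 < c / a := (one_lt_div ha).2 hac
  have hx : x < (c / a) ^ p :=
    Real.lt_pow_of_log_lt (by linarith) ((div_lt_iff₀ (Real.log_pos hca)).1 hp)
  rwa [div_pow, lt_div_iff₀ (pow_pos ha p)] at hx

theorem moqa_ground_state_recovery_general
    (n M p : ℕ)
    (h : Fin M → (Fin n → Bool) → ℝ)
    (hnn : ∀ m b, 0 ≤ h m b)
    (hmax hP : (Fin n → Bool) → ℝ)
    (hmax_def : ∀ b, IsGreatest (Set.range fun m => h m b) (hmax b))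
    (hP_def : ∀ b, hP b = ∑ m : Fin M, (h m b) ^ p)
    (bg : Fin n → Bool)
    (hunique : ∀ b ≠ bg, hmax bg < hmax b)
    (lam1 lam2 r : ℝ)
    (hlam1 : lam1 = hmax bg)
    (hlam1pos : 0 < lam1)
    (hlam2 : IsLeast (hmax '' {b | b ≠ bg}) lam2)
    (hr : r = (lam2 - lam1) / lam1)
    (hpbig : (p : ℝ) > Real.log M / Real.log (r + 1)) :
    ∀ b ≠ bg, hP bg < hP b := by
  intro b hb
  have hgap : lam1 < lam2 := by
    obtain ⟨b₀, hb₀, rfl⟩ := hlam2.1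
    exact hlam1 ▸ hunique b₀ hb₀
  have hr1 : r + 1 = lam2 / lam1 := by
    rw [hr]; field_simp; ring
  have hkey : (M : ℝ) * lam1 ^ p < lam2 ^ p :=
    mul_pow_lt_pow_of_log_div_log_div_lt hlam1pos hgap (hr1 ▸ hpbig)
  obtain ⟨m, hm⟩ := (hmax_def b).1
  rw [hP_def, hP_def]
  exact sum_pow_lt_sum_pow_of_card_mul_pow_lt (hnn · bg)
    (fun m ↦ hlam1 ▸ (hmax_def bg).2 ⟨m, rfl⟩) (hnn · b) m (hlam1pos.trans hgap).le
    ((hlam2.2 ⟨b, hb, rfl⟩).trans_eq hm.symm) (by simpa using hkey)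

/-- **Theorem 1, first part (unique minimizer recovery).**
If `h_max` has a unique minimizer `b_g`, with ground energy `λ₁ = h_max(b_g) > 0`,
first excited energy `λ₂ = min_{b ≠ b_g} h_max(b)`, and spectral gap ratio
`r = (λ₂ − λ₁)/λ₁`, then any positive integer `p` with
`(p : ℝ) > log M / log (r + 1)` makes `b_g` the unique minimizer of `h_p`. -/
theorem moqa_ground_state_recovery
    (n M p : ℕ) (hM : 1 ≤ M) (hp : 1 ≤ p) (hn : 1 ≤ n)
    (h : Fin M → (Fin n → Bool) → ℝ)
    (hnn : ∀ m b, 0 ≤ h m b)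
    (hmax hP : (Fin n → Bool) → ℝ)
    (hmax_def : ∀ b, IsGreatest (Set.range fun m => h m b) (hmax b))
    (hP_def : ∀ b, hP b = ∑ m : Fin M, (h m b) ^ p)
    (bg : Fin n → Bool)
    (hunique : ∀ b ≠ bg, hmax bg < hmax b)
    (lam1 lam2 r : ℝ)
    (hlam1 : lam1 = hmax bg)
    (hlam1pos : 0 < lam1)
    (hlam2 : IsLeast (hmax '' {b | b ≠ bg}) lam2)
    (hr : r = (lam2 - lam1) / lam1)
    (hpbig : (p : ℝ) > Real.log M / Real.log (r + 1)) :
    ∀ b ≠ bg, hP bg < hP b :=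
  moqa_ground_state_recovery_general n M p h hnn hmax hP hmax_def hP_def bg hunique lam1 lam2 r
    hlam1 hlam1pos hlam2 hr hpbig
end

section
/- Let S ⊆ {0,1}^n be the set of minimizers of h_max, assume S is a proper subset (some b lies outside S), let λ₁ be the minimum value of h_max, λ₂ = min over b ∉ S of h_max(b), assume λ₁ > 0, and let r = (λ₂ − λ₁)/λ₁. If the positive integer p satisfies (p : ℝ) > log M / log(r + 1), then the degree-p approximation separates the ground space from all excited states: min over b ∉ S of h_p(b) > max over s ∈ S of h_p(s). -/
/-!
On the ground space every term of `h_p` is at most `λ₁ ^ p`, so `h_p ≤ M λ₁ ^ p` there, while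
off it the largest term alone gives `h_p ≥ λ₂ ^ p`. The bound on `p` says exactly that
`M < (λ₂ / λ₁) ^ p = (r + 1) ^ p`, i.e. `M λ₁ ^ p < λ₂ ^ p`.
-/

open Real Finset

lemma lt_pow_of_log_div_log_lt {x y : ℝ} {p : ℕ} (hy : 1 < y) (h : log x / log y < p) :
    x < y ^ p := by
  have hlog : log x < log (y ^ p) := by
    rwa [log_pow, ← div_lt_iff₀ (log_pos hy)]
  rw [← exp_log (pow_pos (zero_lt_one.trans hy) p)]
  exact lt_exp_of_log_lt hlog

lemma nat_mul_pow_lt_pow_of_log_div_log_lt {a b : ℝ} {M p : ℕ} (ha : 0 < a) (hab : a < b)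
    (h : log M / log (b / a) < p) : M * a ^ p < b ^ p := by
  have hM : (M : ℝ) < (b / a) ^ p :=
    lt_pow_of_log_div_log_lt ((one_lt_div ha).mpr hab) h
  calc (M : ℝ) * a ^ p < (b / a) ^ p * a ^ p := mul_lt_mul_of_pos_right hM (pow_pos ha p)
    _ = b ^ p := by rw [← mul_pow, div_mul_cancel₀ b ha.ne']

section PowSum

variable {ι : Type*} [Fintype ι] {x : ι → ℝ} {c : ℝ}

lemma IsGreatest.pow_le_sum_pow (hx : ∀ i, 0 ≤ x i) (hc : IsGreatest (Set.range x) c)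
    (p : ℕ) : c ^ p ≤ ∑ i, x i ^ p := by
  obtain ⟨i, rfl⟩ := hc.1
  exact single_le_sum (fun j _ => pow_nonneg (hx j) p) (mem_univ i)

lemma IsGreatest.sum_pow_le_card_mul_pow (hx : ∀ i, 0 ≤ x i)
    (hc : IsGreatest (Set.range x) c) (p : ℕ) : ∑ i, x i ^ p ≤ Fintype.card ι * c ^ p := by
  simpa using sum_le_card_nsmul univ (fun i => x i ^ p) (c ^ p)
    fun i _ => pow_le_pow_left₀ (hx i) (hc.2 ⟨i, rfl⟩) p

end PowSum

theorem moqa_degenerate_separation_general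
    (n M p : ℕ)
    (h : Fin M → (Fin n → Bool) → ℝ)
    (hnn : ∀ m b, 0 ≤ h m b)
    (hmax hP : (Fin n → Bool) → ℝ)
    (hmax_def : ∀ b, IsGreatest (Set.range fun m => h m b) (hmax b))
    (hP_def : ∀ b, hP b = ∑ m : Fin M, (h m b) ^ p)
    (lam1 lam2 r : ℝ)
    (hlam1 : IsLeast (Set.range hmax) lam1)
    (hlam1pos : 0 < lam1)
    (S : Set (Fin n → Bool))
    (hS : S = {b | hmax b = lam1})
    (hlam2 : IsLeast (hmax '' Sᶜ) lam2)
    (hr : r = (lam2 - lam1) / lam1)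
    (hpbig : (p : ℝ) > Real.log M / Real.log (r + 1)) :
    ∀ νexc νgnd, IsLeast (hP '' Sᶜ) νexc → IsGreatest (hP '' S) νgnd →
      νgnd < νexc := by
  rintro νexc νgnd ⟨⟨b, hbS, rfl⟩, -⟩ ⟨⟨s, hsS, rfl⟩, -⟩
  subst hS
  have hlam12 : lam1 < lam2 := by
    obtain ⟨b₂, hb₂S, rfl⟩ := hlam2.1
    exact lt_of_le_of_ne (hlam1.2 ⟨b₂, rfl⟩) (Ne.symm hb₂S)
  have hr1 : r + 1 = lam2 / lam1 := by
    rw [hr, sub_div, div_self hlam1pos.ne', sub_add_cancel]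
  have hgnd : hP s ≤ M * lam1 ^ p := by
    simpa [hP_def, hsS.symm] using (hmax_def s).sum_pow_le_card_mul_pow (hnn · s) p
  have hexc : lam2 ^ p ≤ hP b :=
    calc lam2 ^ p ≤ hmax b ^ p :=
          pow_le_pow_left₀ (hlam1pos.trans hlam12).le (hlam2.2 ⟨b, hbS, rfl⟩) p
      _ ≤ hP b := hP_def b ▸ (hmax_def b).pow_le_sum_pow (hnn · b) p
  rw [hr1] at hpbig
  linarith [nat_mul_pow_lt_pow_of_log_div_log_lt hlam1pos hlam12 hpbig]

/-- **Degenerate case: separation of the ground space.**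
Let `S` be the set of minimizers of `h_max`, a proper subset, `λ₁ > 0` the
minimum value, `λ₂ = min_{b ∉ S} h_max(b)`, `r = (λ₂ − λ₁)/λ₁`.  If the
positive integer `p` satisfies `(p : ℝ) > log M / log (r + 1)`, then
`min_{b ∉ S} h_p(b) > max_{s ∈ S} h_p(s)`. -/
theorem moqa_degenerate_separation
    (n M p : ℕ) (hM : 1 ≤ M) (hp : 1 ≤ p) (hn : 1 ≤ n)
    (h : Fin M → (Fin n → Bool) → ℝ)
    (hnn : ∀ m b, 0 ≤ h m b)
    (hmax hP : (Fin n → Bool) → ℝ)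
    (hmax_def : ∀ b, IsGreatest (Set.range fun m => h m b) (hmax b))
    (hP_def : ∀ b, hP b = ∑ m : Fin M, (h m b) ^ p)
    (lam1 lam2 r : ℝ)
    (hlam1 : IsLeast (Set.range hmax) lam1)
    (hlam1pos : 0 < lam1)
    (S : Set (Fin n → Bool))
    (hS : S = {b | hmax b = lam1})
    (hproper : ∃ b, b ∉ S)
    (hlam2 : IsLeast (hmax '' Sᶜ) lam2)
    (hr : r = (lam2 - lam1) / lam1)
    (hpbig : (p : ℝ) > Real.log M / Real.log (r + 1)) :
    ∀ νexc νgnd, IsLeast (hP '' Sᶜ) νexc → IsGreatest (hP '' S) νgnd →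
      νgnd < νexc :=
  moqa_degenerate_separation_general n M p h hnn hmax hP hmax_def hP_def lam1 lam2 r hlam1 hlam1pos
    S hS hlam2 hr hpbig
end

section
/- Let S ⊆ {0,1}^n be the set of minimizers of h_max, assume S is a proper subset, let λ₁ be the minimum value of h_max, λ₂ = min over b ∉ S of h_max(b), assume λ₁ > 0, and let r = (λ₂ − λ₁)/λ₁. If the positive integer p satisfies (p : ℝ) > log M / log(r + 1), then every minimizer of h_p over {0,1}^n belongs to S; i.e., the optimal solution of the approximation is an optimal solution of the original multi-objective problem. -/
/-!
If `b*` minimizes `h_p` but `h_max b* ≥ λ₂`, compare it with a minimizer `b₀` of `h_max`: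
one summand already gives `h_p b* ≥ λ₂ ^ p`, while every summand of `h_p b₀` is at most
`λ₁ ^ p`, so `h_p b₀ ≤ M λ₁ ^ p`. The hypothesis on `p` is exactly `M < (λ₂ / λ₁) ^ p`,
i.e. `M λ₁ ^ p < λ₂ ^ p`, contradicting the minimality of `b*`.
-/

open Real Finset

theorem sum_pow_le_card_mul_pow {ι : Type*} [Fintype ι] {f : ι → ℝ} {a : ℝ}
    (hf : ∀ i, 0 ≤ f i) (hfa : ∀ i, f i ≤ a) (p : ℕ) :
    ∑ i, f i ^ p ≤ Fintype.card ι * a ^ p := by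
  simpa using sum_le_card_nsmul univ (fun i => f i ^ p) (a ^ p)
    fun i _ => pow_le_pow_left₀ (hf i) (hfa i) p

theorem pow_le_sum_pow {ι : Type*} [Fintype ι] {f : ι → ℝ} (hf : ∀ i, 0 ≤ f i) (p : ℕ)
    (i : ι) : f i ^ p ≤ ∑ j, f j ^ p :=
  single_le_sum (fun j _ => pow_nonneg (hf j) p) (mem_univ i)

theorem mul_pow_lt_pow_of_log_div_log_lt {M a b : ℝ} {p : ℕ} (hM : 0 < M) (ha : 0 < a)
    (hab : a < b) (hp : log M / log (b / a) < p) : M * a ^ p < b ^ p := by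
  have hlog : 0 < log (b / a) := log_pos ((one_lt_div ha).2 hab)
  have hMlt : M < (b / a) ^ p := by
    rw [← log_lt_log_iff hM (pow_pos (div_pos (ha.trans hab) ha) p), log_pow]
    exact (div_lt_iff₀ hlog).1 hp
  calc M * a ^ p < (b / a) ^ p * a ^ p := mul_lt_mul_of_pos_right hMlt (pow_pos ha p)
    _ = b ^ p := by rw [div_pow, div_mul_cancel₀ _ (pow_ne_zero _ ha.ne')]

theorem moqa_degenerate_recovery_general
    (n M p : ℕ)
    (h : Fin M → (Fin n → Bool) → ℝ)
    (hnn : ∀ m b, 0 ≤ h m b)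
    (hmax hP : (Fin n → Bool) → ℝ)
    (hmax_def : ∀ b, IsGreatest (Set.range fun m => h m b) (hmax b))
    (hP_def : ∀ b, hP b = ∑ m : Fin M, (h m b) ^ p)
    (lam1 lam2 r : ℝ)
    (hlam1 : IsLeast (Set.range hmax) lam1)
    (hlam1pos : 0 < lam1)
    (S : Set (Fin n → Bool))
    (hS : S = {b | hmax b = lam1})
    (hlam2 : IsLeast (hmax '' Sᶜ) lam2)
    (hr : r = (lam2 - lam1) / lam1)
    (hpbig : (p : ℝ) > Real.log M / Real.log (r + 1)) :
    ∀ bstar, (∀ b, hP bstar ≤ hP b) → bstar ∈ S := by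
  intro bstar hopt
  by_contra hbstar
  obtain ⟨b₀, hb₀⟩ := hlam1.1
  obtain ⟨b₂, hb₂S, hb₂⟩ := hlam2.1
  have hlam12 : lam1 < lam2 := by
    refine lt_of_le_of_ne (hb₂ ▸ hlam1.2 ⟨b₂, rfl⟩) fun heq => hb₂S ?_
    rw [hS, Set.mem_ofPred_eq, hb₂, heq]
  have hMpos : (0 : ℝ) < M := by
    obtain ⟨m, -⟩ := (hmax_def b₀).1
    exact_mod_cast m.pos
  have hr1 : r + 1 = lam2 / lam1 := by
    rw [hr]; field_simp; ring
  have hupper : hP b₀ ≤ M * lam1 ^ p := by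
    simpa [hP_def, hb₀] using
      sum_pow_le_card_mul_pow (hnn · b₀) (fun m => hb₀ ▸ (hmax_def b₀).2 ⟨m, rfl⟩) p
  have hlower : lam2 ^ p ≤ hP bstar := by
    obtain ⟨m, hm⟩ := (hmax_def bstar).1
    have hle : lam2 ≤ h m bstar := hlam2.2 ⟨bstar, hbstar, hm.symm⟩
    rw [hP_def]
    exact (pow_le_pow_left₀ (hlam1pos.trans hlam12).le hle p).trans
      (pow_le_sum_pow (hnn · bstar) p m)
  have hgap := mul_pow_lt_pow_of_log_div_log_lt hMpos hlam1pos hlam12 (hr1 ▸ hpbig)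
  linarith [hopt b₀]

/-- **Degenerate case: minimizers of the approximation are true minimizers.**
Let `S` be the set of minimizers of `h_max`, a proper subset, `λ₁ > 0` the
minimum value, `λ₂ = min_{b ∉ S} h_max(b)`, `r = (λ₂ − λ₁)/λ₁`.  If the
positive integer `p` satisfies `(p : ℝ) > log M / log (r + 1)`, then every
minimizer of `h_p` belongs to `S`. -/
theorem moqa_degenerate_recovery
    (n M p : ℕ) (hM : 1 ≤ M) (hp : 1 ≤ p) (hn : 1 ≤ n)
    (h : Fin M → (Fin n → Bool) → ℝ)
    (hnn : ∀ m b, 0 ≤ h m b)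
    (hmax hP : (Fin n → Bool) → ℝ)
    (hmax_def : ∀ b, IsGreatest (Set.range fun m => h m b) (hmax b))
    (hP_def : ∀ b, hP b = ∑ m : Fin M, (h m b) ^ p)
    (lam1 lam2 r : ℝ)
    (hlam1 : IsLeast (Set.range hmax) lam1)
    (hlam1pos : 0 < lam1)
    (S : Set (Fin n → Bool))
    (hS : S = {b | hmax b = lam1})
    (hproper : ∃ b, b ∉ S)
    (hlam2 : IsLeast (hmax '' Sᶜ) lam2)
    (hr : r = (lam2 - lam1) / lam1)
    (hpbig : (p : ℝ) > Real.log M / Real.log (r + 1)) :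
    ∀ bstar, (∀ b, hP bstar ≤ hP b) → bstar ∈ S :=
  moqa_degenerate_recovery_general n M p h hnn hmax hP hmax_def hP_def lam1 lam2 r hlam1 hlam1pos S
    hS hlam2 hr hpbig
end

section
/- Let S ⊆ {0,1}^n be the set of minimizers of h_max, assume S is a proper subset, let λ₁ be the minimum value of h_max with λ₁ > 0, and λ₂ = min over b ∉ S of h_max(b). If the positive integer p satisfies (λ₂/λ₁)^(p−1) ≥ M, then every non-minimizer is relatively separated from every minimizer by more than the original gap ratio: for all b ∉ S and all s ∈ S, h_p(b) ≥ (λ₂/λ₁) · h_p(s). -/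
/-- **Degenerate case: relative separation of non-minimizers.**
Let `S` be the set of minimizers of `h_max`, a proper subset, `λ₁ > 0` the
minimum value and `λ₂ = min_{b ∉ S} h_max(b)`.  If the positive integer `p`
satisfies `(λ₂/λ₁)^(p−1) ≥ M`, then for all `b ∉ S` and `s ∈ S`,
`h_p(b) ≥ (λ₂/λ₁) · h_p(s)`. -/
theorem moqa_degenerate_relative_separation
    (n M p : ℕ) (hM : 1 ≤ M) (hp : 1 ≤ p) (hn : 1 ≤ n)
    (h : Fin M → (Fin n → Bool) → ℝ)
    (hnn : ∀ m b, 0 ≤ h m b)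
    (hmax hP : (Fin n → Bool) → ℝ)
    (hmax_def : ∀ b, IsGreatest (Set.range fun m => h m b) (hmax b))
    (hP_def : ∀ b, hP b = ∑ m : Fin M, (h m b) ^ p)
    (lam1 lam2 : ℝ)
    (hlam1 : IsLeast (Set.range hmax) lam1)
    (hlam1pos : 0 < lam1)
    (S : Set (Fin n → Bool))
    (hS : S = {b | hmax b = lam1})
    (hproper : ∃ b, b ∉ S)
    (hlam2 : IsLeast (hmax '' Sᶜ) lam2)
    (hpbig : (lam2 / lam1) ^ (p - 1) ≥ (M : ℝ)) :
    ∀ b ∉ S, ∀ s ∈ S, hP b ≥ (lam2 / lam1) * hP s := by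
  intro b hb s hs
  have hlam2ge : lam1 ≤ lam2 := by
    obtain ⟨b0, _, hb0⟩ := hlam2.1
    exact hb0 ▸ hlam1.2 ⟨b0, rfl⟩
  have hlam2pos : 0 < lam2 := lt_of_lt_of_le hlam1pos hlam2ge
  have hsS : hmax s = lam1 := by rw [hS] at hs; exact hs
  have hub : hP s ≤ M * lam1 ^ p := by
    rw [hP_def]
    calc ∑ m : Fin M, h m s ^ p ≤ ∑ m : Fin M, lam1 ^ p := by
          apply Finset.sum_le_sum
          intro m _
          exact pow_le_pow_left₀ (hnn m s) (hsS ▸ (hmax_def s).2 ⟨m, rfl⟩) p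
      _ = M * lam1 ^ p := by simp [Finset.sum_const, mul_comm]
  have hlb : lam2 ^ p ≤ hP b := by
    obtain ⟨m0, hm0⟩ := (hmax_def b).1
    have h1 : lam2 ≤ h m0 b := by
      have := hlam2.2 ⟨b, hb, rfl⟩
      simpa [← hm0] using this
    rw [hP_def]
    calc lam2 ^ p ≤ h m0 b ^ p := pow_le_pow_left₀ hlam2pos.le h1 p
      _ ≤ ∑ m : Fin M, h m b ^ p :=
        Finset.single_le_sum (fun m _ => pow_nonneg (hnn m b) p) (Finset.mem_univ m0)
  have hppred : p = (p - 1) + 1 := (Nat.succ_pred_eq_of_pos hp).symm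
  have key : (lam2 / lam1) * (↑M * lam1 ^ p) ≤ lam2 ^ p := by
    have h1 : (M : ℝ) * lam1 ^ (p - 1) ≤ lam2 ^ (p - 1) := by
      have h2 := hpbig
      rw [ge_iff_le, div_pow] at h2
      calc (M:ℝ) * lam1 ^ (p-1) ≤ (lam2 ^ (p-1) / lam1 ^ (p-1)) * lam1 ^ (p-1) :=
            mul_le_mul_of_nonneg_right h2 (by positivity)
        _ = lam2 ^ (p-1) := div_mul_cancel₀ _ (by positivity)
    have hEq : (lam2 / lam1) * (↑M * lam1 ^ p) = lam2 * ((M:ℝ) * lam1 ^ (p-1)) := by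
      have : lam1 ^ p = lam1 * lam1 ^ (p - 1) := by
        conv_lhs => rw [hppred]
        ring
      rw [this]; field_simp
    rw [hEq]
    calc lam2 * ((M:ℝ) * lam1 ^ (p-1)) ≤ lam2 * lam2 ^ (p-1) :=
          mul_le_mul_of_nonneg_left h1 hlam2pos.le
      _ = lam2 ^ p := by conv_rhs => rw [hppred]; rw [pow_succ]; rw [mul_comm]
  have hrnn : 0 ≤ lam2 / lam1 := by positivity
  calc (lam2 / lam1) * hP s ≤ (lam2 / lam1) * (↑M * lam1 ^ p) :=
        mul_le_mul_of_nonneg_left hub hrnn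
    _ ≤ lam2 ^ p := key
    _ ≤ hP b := hlb
end
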